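/- arXiv:2605.27173 — 5 statements merged into one kernel-verified Lean document; each statement's English description precedes it below -/
import Mathlib

section
/- Let G be a graph of order n and 1 ≤ k ≤ n−2 an integer. If G is fractional k-factor-critical, then for every vertex subset S with |S| ≥ k, the number of isolated vertices of G − S is at most |S| − k. -/
open SimpleGraph Finset

/-- The number of isolated vertices of a graph. -/
noncomputable def isolatedCount {V : Type*} (G : SimpleGraph V) : ℕ :=
  Nat.card {v : V // ∀ u, ¬ G.Adj v u}

/-- `G` has a fractional perfect matching: a symmetric edge-weighting with values in
`[0,1]`, vanishing off edges, whose weights at every vertex sum to `1`. -/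
def HasFracPM {V : Type*} (G : SimpleGraph V) : Prop :=
  ∃ w : V → V → ℝ, (∀ u v, w u v = w v u) ∧ (∀ u v, 0 ≤ w u v) ∧ (∀ u v, w u v ≤ 1) ∧
    (∀ u v, ¬ G.Adj u v → w u v = 0) ∧ ∀ v, ∑ᶠ u, w v u = 1

/-- `G` is fractional `k`-factor-critical: deleting any `k` vertices leaves a graph
with a fractional perfect matching. -/
def IsFracKFactorCritical {V : Type*} (G : SimpleGraph V) (k : ℕ) : Prop :=
  ∀ S : Finset V, S.card = k → HasFracPM (G.induce ((↑S : Set V)ᶜ))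

theorem stmt1 {V : Type*} [Fintype V] (G : SimpleGraph V) (n k : ℕ)
    (hn : Fintype.card V = n) (hk : 1 ≤ k) (hkn : k ≤ n - 2)
    (hcrit : IsFracKFactorCritical G k) :
    ∀ S : Finset V, k ≤ S.card →
      isolatedCount (G.induce ((↑S : Set V)ᶜ)) ≤ S.card - k := by
  classical
  intro S hS
  obtain ⟨T, hTS, hTcard⟩ := Finset.exists_subset_card_eq hS
  obtain ⟨w, hsymm, hnn, hle1, hzero, hsum⟩ := hcrit T hTcard
  have hts : ∀ v : V, v ∉ S → v ∈ ((↑T : Set V)ᶜ) := by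
    intro v hv
    simp only [Set.mem_compl_iff, Finset.mem_coe]
    exact fun h => hv (hTS h)
  set p : ↑((↑T : Set V)ᶜ) → Prop :=
    fun v => (↑v : V) ∉ S ∧ ∀ u, u ∉ S → ¬ G.Adj ↑v u with hp
  set I : Finset ↑((↑T : Set V)ᶜ) := Finset.univ.filter p with hI
  set A : Finset ↑((↑T : Set V)ᶜ) :=
    Finset.univ.filter (fun u => (↑u : V) ∈ S) with hAdef
  have hIcard : isolatedCount (G.induce ((↑S : Set V)ᶜ)) = I.card := by
    have e : {v : ↑((↑S : Set V)ᶜ) // ∀ u, ¬ (G.induce ((↑S : Set V)ᶜ)).Adj v u} ≃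
        {v : ↑((↑T : Set V)ᶜ) // p v} :=
      { toFun := fun x => ⟨⟨↑x.1, hts _ x.1.2⟩, x.1.2, fun u hu => x.2 ⟨u, hu⟩⟩
        invFun := fun y => ⟨⟨↑y.1, y.2.1⟩, fun u => y.2.2 ↑u u.2⟩
        left_inv := fun x => rfl
        right_inv := fun y => rfl }
    rw [isolatedCount, Nat.card_congr e, Nat.card_eq_fintype_card, Fintype.card_subtype]
  have hA : A.card = S.card - k := by
    have h1 : A.card = (S \ T).card := by
      refine Finset.card_bij (fun u _ => (↑u : V)) ?_ ?_ ?_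
      · intro a ha
        simp only [hAdef, Finset.mem_filter, Finset.mem_univ, true_and] at ha
        rw [Finset.mem_sdiff]
        exact ⟨ha, a.2⟩
      · intro a _ b _ h
        exact Subtype.ext h
      · intro b hb
        rw [Finset.mem_sdiff] at hb
        refine ⟨⟨b, hb.2⟩, ?_, rfl⟩
        simp only [hAdef, Finset.mem_filter, Finset.mem_univ, true_and]
        exact hb.1
    rw [h1, Finset.card_sdiff_of_subset hTS, hTcard]
  have key : (I.card : ℝ) ≤ A.card := by
    have hrow : ∀ v ∈ I, ∑ u ∈ A, w v u = 1 := by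
      intro v hv
      simp only [hI, hp, Finset.mem_filter, Finset.mem_univ, true_and] at hv
      have h1 : ∑ u : ↑((↑T : Set V)ᶜ), w v u = 1 := by
        have := hsum v
        rwa [finsum_eq_sum_of_fintype] at this
      rw [← h1]
      apply Finset.sum_subset (Finset.subset_univ A)
      intro u _ hu
      simp only [hAdef, Finset.mem_filter, Finset.mem_univ, true_and] at hu
      exact hzero _ _ (fun hadj => hv.2 ↑u hu hadj)
    calc (I.card : ℝ) = ∑ v ∈ I, ∑ u ∈ A, w v u := by
          rw [Finset.sum_congr rfl hrow]; simp
      _ = ∑ u ∈ A, ∑ v ∈ I, w u v := by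
          rw [Finset.sum_comm]
          exact Finset.sum_congr rfl fun u _ => Finset.sum_congr rfl fun v _ => hsymm _ _
      _ ≤ ∑ u ∈ A, (1 : ℝ) := by
          apply Finset.sum_le_sum
          intro u _
          have h1 : ∑ v : ↑((↑T : Set V)ᶜ), w u v = 1 := by
            have := hsum u
            rwa [finsum_eq_sum_of_fintype] at this
          rw [← h1]
          exact Finset.sum_le_sum_of_subset_of_nonneg (Finset.subset_univ I)
            (fun v _ _ => hnn u v)
      _ = A.card := by simp
  have hfin : I.card ≤ A.card := by exact_mod_cast key
  rw [hIcard]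
  omega
end

section
/- Let k ≥ 1 and δ ≥ k+1 be integers, and let n − k be a positive even integer with n ≥ 2δ − k + 6. Then the graph K_δ ∨ (K_{n−2δ+k−3} ∪ K_3 ∪ (δ−k)K_1) is not k-factor-critical. Specifically, removing the set S of the δ vertices of the joined clique K_δ leaves δ − k + 2 odd components, which exceeds |S| − k = δ − k. -/
open SimpleGraph Finset

/-- `G` has a perfect matching. -/
def HasPM {V : Type*} (G : SimpleGraph V) : Prop :=
  ∃ M : G.Subgraph, M.IsPerfectMatching

/-- `G` is `k`-factor-critical: deleting any `k` vertices leaves a graph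
with a perfect matching. -/
def IsKFactorCritical {V : Type*} (G : SimpleGraph V) (k : ℕ) : Prop :=
  ∀ S : Finset V, S.card = k → HasPM (G.induce ((↑S : Set V)ᶜ))

/-- The graph `K_s ∨ (K_{f 0} ∪ K_{f 1} ∪ ⋯ ∪ K_{f (t-1)})`: the join of a clique on `s`
vertices with the disjoint union of cliques of sizes `f 0, …, f (t-1)`. -/
def joinCliques (s t : ℕ) (f : Fin t → ℕ) :
    SimpleGraph (Fin s ⊕ Σ i : Fin t, Fin (f i)) where
  Adj x y := x ≠ y ∧ (match x, y with
    | Sum.inr a, Sum.inr b => a.1 = b.1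
    | _, _ => True)
  symm := by
    constructor
    rintro x y ⟨hne, h⟩
    refine ⟨hne.symm, ?_⟩
    cases x <;> cases y <;> simp_all
  loopless := by constructor; rintro x ⟨hne, _⟩; exact hne rfl

/-- `K_δ ∨ (K_{n-2δ+k-3} ∪ K_3 ∪ (δ-k)K_1)`. -/
def Gdelta (n k d : ℕ) :=
  joinCliques d (2 + (d - k))
    (fun i => if (i : ℕ) = 0 then n + k - 2 * d - 3 else if (i : ℕ) = 1 then 3 else 1)

theorem stmt2 (n k d : ℕ) (hk : 1 ≤ k) (hd : k + 1 ≤ d)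
    (hn : 2 * d + 6 ≤ n + k) (hpos : k < n) (heven : Even (n - k)) :
    ¬ IsKFactorCritical (Gdelta n k d) k := by
  classical
  intro hcrit
  set t : ℕ := 2 + (d - k) with ht
  set f : Fin t → ℕ :=
    (fun i => if (i : ℕ) = 0 then n + k - 2 * d - 3 else if (i : ℕ) = 1 then 3 else 1)
    with hfdef
  -- two numeric invariants of vertices
  set Φ : (Fin d ⊕ Σ i : Fin t, Fin (f i)) → ℕ := fun v => match v with
    | Sum.inl _ => 0
    | Sum.inr s => (s.1 : ℕ) with hΦ
  set Ψ : (Fin d ⊕ Σ i : Fin t, Fin (f i)) → ℕ := fun v => match v with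
    | Sum.inl _ => 0
    | Sum.inr s => (s.2 : ℕ) with hΨ
  -- the deleted set : first k vertices of the K_d side
  have hkd : k ≤ d := by omega
  set e : Fin k ↪ (Fin d ⊕ Σ i : Fin t, Fin (f i)) :=
    (Fin.castLEEmb hkd).trans ⟨Sum.inl, Sum.inl_injective⟩ with he
  set S : Finset (Fin d ⊕ Σ i : Fin t, Fin (f i)) := Finset.univ.map e with hS
  obtain ⟨M, hM⟩ := hcrit S (by simp [hS])
  rw [SimpleGraph.Subgraph.isPerfectMatching_iff] at hM
  -- the partner function of the perfect matching
  set P : ((↑S : Set (Fin d ⊕ Σ i : Fin t, Fin (f i)))ᶜ : Set (Fin d ⊕ Σ i : Fin t, Fin (f i))) → ((↑S : Set (Fin d ⊕ Σ i : Fin t, Fin (f i)))ᶜ : Set (Fin d ⊕ Σ i : Fin t, Fin (f i))) :=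
    fun v => (hM v).choose with hPdef
  have hP : ∀ v, M.Adj v (P v) := fun v => (hM v).choose_spec.1
  have hPu : ∀ v w, M.Adj v w → w = P v := fun v w h => (hM v).choose_spec.2 w h
  have hPP : ∀ v, P (P v) = v := fun v => ((hPu (P v) v (hP v).symm)).symm
  have hPinj : Function.Injective P := by
    intro a b h
    rw [← hPP a, h, hPP b]
  have hAdj : ∀ v : ((↑S : Set (Fin d ⊕ Σ i : Fin t, Fin (f i)))ᶜ : Set (Fin d ⊕ Σ i : Fin t, Fin (f i))), (Gdelta n k d).Adj v.1 (P v).1 :=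
    fun v => M.adj_sub (hP v)
  -- every inr vertex survives
  have hmem : ∀ x : Σ i : Fin t, Fin (f i), (Sum.inr x : Fin d ⊕ Σ i : Fin t, Fin (f i)) ∈ ((↑S : Set (Fin d ⊕ Σ i : Fin t, Fin (f i)))ᶜ) := by
    intro x
    intro hx
    obtain ⟨i, -, hi⟩ := Finset.mem_map.mp (Finset.mem_coe.mp hx)
    exact Sum.inl_ne_inr hi
  -- surviving inl vertices have index ≥ k
  have hm_ge : ∀ (v : ((↑S : Set (Fin d ⊕ Σ i : Fin t, Fin (f i)))ᶜ : Set (Fin d ⊕ Σ i : Fin t, Fin (f i)))) (m : Fin d), v.1 = Sum.inl m → k ≤ m.1 := by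
    intro v m hvm
    by_contra hlt
    push_neg at hlt
    refine v.2 (Finset.mem_coe.mpr (Finset.mem_map.mpr ⟨⟨m.1, hlt⟩, Finset.mem_univ _, ?_⟩))
    rw [hvm]
    exact congrArg Sum.inl (Fin.ext rfl)
  -- pendant vertices
  have hdk1 : 1 ≤ d - k := by omega
  have hidx : ∀ j : Fin (d - k), (j.1 + 2) < t := by intro j; omega
  set idx : Fin (d - k) → Fin t := fun j => ⟨j.1 + 2, hidx j⟩ with hidxdef
  have hfidx : ∀ j, f (idx j) = 1 := by
    intro j
    simp only [hfdef, hidxdef]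
    rw [if_neg (by omega), if_neg (by omega)]
  set vert : Fin (d - k) → ((↑S : Set (Fin d ⊕ Σ i : Fin t, Fin (f i)))ᶜ : Set (Fin d ⊕ Σ i : Fin t, Fin (f i))) :=
    fun j => ⟨Sum.inr ⟨idx j, ⟨0, by rw [hfidx j]; norm_num⟩⟩, hmem _⟩ with hvert
  -- partner of a pendant vertex is on the inl side
  have hpend : ∀ j : Fin (d - k),
      ∃ m : Fin d, k ≤ m.1 ∧ (P (vert j)).1 = Sum.inl m := by
    intro j
    have h := hAdj (vert j)
    rcases hc : (P (vert j)).1 with m | b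
    · exact ⟨m, hm_ge _ m hc, rfl⟩
    · exfalso
      rw [hc] at h
      obtain ⟨hne, hfst⟩ := h
      obtain ⟨b1, b2⟩ := b
      have hb1 : idx j = b1 := hfst
      subst hb1
      have hb2 : (b2 : ℕ) = 0 := by
        have h1 := b2.2
        have h2 := hfidx j
        omega
      apply hne
      exact congrArg Sum.inr (congrArg (Sigma.mk (idx j)) (Fin.ext hb2.symm))
  -- the K₃
  have hi1 : 1 < t := by omega
  set i1 : Fin t := ⟨1, hi1⟩ with hi1def
  have hfi1 : f i1 = 3 := by
    simp only [hfdef, hi1def]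
    norm_num
  set a : Fin 3 → ((↑S : Set (Fin d ⊕ Σ i : Fin t, Fin (f i)))ᶜ : Set (Fin d ⊕ Σ i : Fin t, Fin (f i))) :=
    fun j => ⟨Sum.inr ⟨i1, ⟨j.1, by rw [hfi1]; exact j.2⟩⟩, hmem _⟩ with ha
  have hainj : Function.Injective a := by
    intro x y hxy
    have h1 := congrArg (fun v : ((↑S : Set (Fin d ⊕ Σ i : Fin t, Fin (f i)))ᶜ : Set (Fin d ⊕ Σ i : Fin t, Fin (f i))) => v.1) hxy
    have h3 : (x : ℕ) = (y : ℕ) := congrArg Ψ h1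
    exact Fin.ext h3
  -- partner of a K₃-vertex is inl, or another K₃-vertex
  have hK3 : ∀ j : Fin 3,
      (∃ m : Fin d, k ≤ m.1 ∧ (P (a j)).1 = Sum.inl m) ∨
      (∃ j' : Fin 3, P (a j) = a j' ∧ j' ≠ j) := by
    intro j
    have h := hAdj (a j)
    rcases hc : (P (a j)).1 with m | b
    · exact Or.inl ⟨m, hm_ge _ m hc, rfl⟩
    · rw [hc] at h
      obtain ⟨hne, hfst⟩ := h
      obtain ⟨b1, b2⟩ := b
      have hb1 : i1 = b1 := hfst
      subst hb1
      have hb2 : (b2 : ℕ) < 3 := by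
        have h1 := b2.2
        have h2 := hfi1
        omega
      refine Or.inr ⟨⟨b2.1, hb2⟩, ?_, ?_⟩
      · apply Subtype.ext
        refine hc.trans ?_
        exact (congrArg Sum.inr (congrArg (Sigma.mk i1) (Fin.ext rfl))).symm
      · intro hj
        apply hne
        exact congrArg Sum.inr (congrArg (Sigma.mk i1) (Fin.ext (congrArg Fin.val hj).symm))
  -- one K₃ vertex has an inl partner
  have hK3src : ∃ j : Fin 3, ∃ m : Fin d, k ≤ m.1 ∧ (P (a j)).1 = Sum.inl m := by
    by_contra hno
    push_neg at hno
    have hpex : ∀ j : Fin 3, ∃ j' : Fin 3, P (a j) = a j' ∧ j' ≠ j := by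
      intro j
      rcases hK3 j with h | h
      · obtain ⟨m, hm1, hm2⟩ := h
        exact absurd hm2 (hno j m hm1)
      · exact h
    choose p hp1 hp2 using hpex
    have hpp : ∀ j, p (p j) = j := by
      intro j
      apply hainj
      rw [← hp1 (p j), ← hp1 j, hPP]
    have key : ∀ x y z : Fin 3, p x = y → (x : ℕ) ≠ (y : ℕ) → (y : ℕ) ≠ (z : ℕ) →
        (x : ℕ) ≠ (z : ℕ) → False := by
      intro x y z hxy hxyne hyz hxz
      have hyx : p y = x := by rw [← hxy, hpp]
      have hz2 := (p z).2
      have hzz : ((p z) : ℕ) ≠ (z : ℕ) := fun h => hp2 z (Fin.ext h)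
      have hzx : ((p z) : ℕ) ≠ (x : ℕ) := by
        intro h
        have hzx' : p z = x := Fin.ext h
        have h2 := hpp z
        rw [hzx', hxy] at h2
        exact hyz (congrArg Fin.val h2)
      have hzy : ((p z) : ℕ) ≠ (y : ℕ) := by
        intro h
        have hzy' : p z = y := Fin.ext h
        have h2 := hpp z
        rw [hzy', hyx] at h2
        exact hxz (congrArg Fin.val h2)
      have hx3 := x.2; have hy3 := y.2; have hz3 := z.2
      omega
    have h00 : ((p 0 : Fin 3) : ℕ) = 1 ∨ ((p 0 : Fin 3) : ℕ) = 2 := by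
      have h1 := (p 0).2
      have h2 : ((p 0 : Fin 3) : ℕ) ≠ 0 := fun h => hp2 0 (Fin.ext h)
      omega
    rcases h00 with h | h
    · exact key 0 1 2 (Fin.ext h) (by decide) (by decide) (by decide)
    · exact key 0 2 1 (Fin.ext h) (by decide) (by decide) (by decide)
  obtain ⟨j0, m0, hm0k, hm0⟩ := hK3src
  -- the source function
  set src : Fin (d - k + 1) → ((↑S : Set (Fin d ⊕ Σ i : Fin t, Fin (f i)))ᶜ : Set (Fin d ⊕ Σ i : Fin t, Fin (f i))) :=
    fun j => if h : j.1 = 0 then a j0 else vert ⟨j.1 - 1, by omega⟩ with hsrc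
  have hsrcP : ∀ j, ∃ m : Fin d, k ≤ m.1 ∧ (P (src j)).1 = Sum.inl m := by
    intro j
    by_cases h : j.1 = 0
    · simp only [hsrc]
      rw [dif_pos h]
      exact ⟨m0, hm0k, hm0⟩
    · simp only [hsrc]
      rw [dif_neg h]
      exact hpend _
  have hsrcinj : Function.Injective src := by
    intro x y hxy
    simp only [hsrc] at hxy
    by_cases hx : x.1 = 0 <;> by_cases hy : y.1 = 0
    · apply Fin.ext; omega
    · exfalso
      rw [dif_pos hx, dif_neg hy] at hxy
      have h1 := congrArg (fun v : ((↑S : Set (Fin d ⊕ Σ i : Fin t, Fin (f i)))ᶜ : Set (Fin d ⊕ Σ i : Fin t, Fin (f i))) => v.1) hxy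
      have h3 : (1 : ℕ) = (y : ℕ) - 1 + 2 := congrArg Φ h1
      omega
    · exfalso
      rw [dif_neg hx, dif_pos hy] at hxy
      have h1 := congrArg (fun v : ((↑S : Set (Fin d ⊕ Σ i : Fin t, Fin (f i)))ᶜ : Set (Fin d ⊕ Σ i : Fin t, Fin (f i))) => v.1) hxy
      have h3 : (x : ℕ) - 1 + 2 = (1 : ℕ) := congrArg Φ h1
      omega
    · rw [dif_neg hx, dif_neg hy] at hxy
      have h1 := congrArg (fun v : ((↑S : Set (Fin d ⊕ Σ i : Fin t, Fin (f i)))ᶜ : Set (Fin d ⊕ Σ i : Fin t, Fin (f i))) => v.1) hxy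
      have h3 : (x : ℕ) - 1 + 2 = (y : ℕ) - 1 + 2 := congrArg Φ h1
      apply Fin.ext; omega
  -- build the contradiction by counting
  choose g hg1 hg2 using hsrcP
  set F : Fin (d - k + 1) → Fin (d - k) :=
    fun j => ⟨(g j).1 - k, by have h1 := (g j).2; have h2 := hg1 j; omega⟩ with hF
  have hFinj : Function.Injective F := by
    intro x y hxy
    have hgval : (g x).1 = (g y).1 := by
      have h1 := hg1 x; have h2 := hg1 y
      have h3 := congrArg Fin.val hxy
      simp only [hF] at h3
      omega
    have hgg : g x = g y := Fin.ext hgval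
    have hPP' : (P (src x)).1 = (P (src y)).1 :=
      (hg2 x).trans ((congrArg Sum.inl hgg).trans (hg2 y).symm)
    exact hsrcinj (hPinj (Subtype.ext hPP'))
  have hcard := Fintype.card_le_of_injective F hFinj
  simp only [Fintype.card_fin] at hcard
  omega
end

section
/- Let s ≥ 1, t ≥ 2, p ≥ 1 be integers and n = n₁ + n₂ + ⋯ + n_t + s, where n₁ ≥ n₂ ≥ ⋯ ≥ n_t ≥ p, n₂ ≥ 3, and n₁ < n − s − (t−2)p − 3. Then the number of edges of K_s ∨ (K_{n₁} ∪ K_{n₂} ∪ ⋯ ∪ K_{n_t}) is strictly less than the number of edges of K_s ∨ (K_{n−s−(t−2)p−3} ∪ K_3 ∪ (t−2)K_p). -/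
open SimpleGraph Finset

instance decAdj (s t : ℕ) (f : Fin t → ℕ) : DecidableRel (joinCliques s t f).Adj := by
  intro x y
  cases x <;> cases y <;> exact instDecidableAnd

lemma adj_inl (s t : ℕ) (f : Fin t → ℕ) (a : Fin s) (x : Fin s ⊕ Σ i : Fin t, Fin (f i)) :
    (joinCliques s t f).Adj (Sum.inl a) x ↔ Sum.inl a ≠ x := by
  cases x <;> simp [joinCliques]

lemma adj_inr (s t : ℕ) (f : Fin t → ℕ) (v : Σ i : Fin t, Fin (f i))
    (x : Fin s ⊕ Σ i : Fin t, Fin (f i)) :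
    (joinCliques s t f).Adj (Sum.inr v) x ↔
      (∃ a : Fin s, x = Sum.inl a) ∨ (∃ w : Σ i : Fin t, Fin (f i), x = Sum.inr w ∧ w ≠ v ∧ w.1 = v.1) := by
  cases x with
  | inl a => simp [joinCliques]
  | inr w =>
    constructor
    · rintro ⟨hne, h⟩
      exact Or.inr ⟨w, rfl, fun hh => hne (by simp [hh]), by simpa [joinCliques] using h.symm⟩
    · rintro (⟨a, h⟩ | ⟨w', hw', hne, h1⟩)
      · exact absurd h (by simp)
      · obtain rfl : w' = w := by simpa using hw'.symm
        exact ⟨by simpa using (Ne.symm hne), h1.symm⟩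

lemma degree_inl (s t : ℕ) (f : Fin t → ℕ) (a : Fin s) :
    (joinCliques s t f).degree (Sum.inl a) = s + (∑ i, f i) - 1 := by
  have h : (joinCliques s t f).neighborFinset (Sum.inl a) = univ.erase (Sum.inl a) := by
    ext x
    simp [mem_neighborFinset, adj_inl, ne_comm]
  rw [degree, h, card_erase_of_mem (mem_univ _)]
  simp

lemma degree_inr (s t : ℕ) (f : Fin t → ℕ) (v : Σ i : Fin t, Fin (f i)) :
    (joinCliques s t f).degree (Sum.inr v) = s + f v.1 - 1 := by
  classical
  have h : (joinCliques s t f).neighborFinset (Sum.inr v) =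
      (univ.map ⟨Sum.inl, Sum.inl_injective⟩) ∪
      ((univ.erase v.2).map ⟨fun b => Sum.inr ⟨v.1, b⟩, by intro x y h; simpa using h⟩) := by
    ext x
    rw [mem_neighborFinset, adj_inr]
    constructor
    · rintro (⟨a, rfl⟩ | ⟨w, rfl, hne, h1⟩)
      · exact mem_union_left _ (by simp)
      · refine mem_union_right _ ?_
        obtain ⟨i, b⟩ := w
        obtain ⟨j, c⟩ := v
        cases h1
        simp only [mem_map, Function.Embedding.coeFn_mk]
        refine ⟨b, ?_, rfl⟩
        simp only [mem_erase, mem_univ, and_true]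
        intro hb; exact hne (by simp [hb])
    · intro hx
      rcases mem_union.1 hx with h | h
      · obtain ⟨a, _, rfl⟩ := mem_map.1 h
        exact Or.inl ⟨a, rfl⟩
      · obtain ⟨b, hb, rfl⟩ := mem_map.1 h
        refine Or.inr ⟨⟨v.1, b⟩, rfl, ?_, rfl⟩
        intro hh
        obtain ⟨i, c⟩ := v
        simp only [mem_erase, mem_univ, and_true] at hb
        exact hb (by cases hh; rfl)
  rw [degree, h, card_union_of_disjoint (by simp [Finset.disjoint_left])]
  rw [card_map, card_map, card_erase_of_mem (mem_univ _)]
  have h1 : 0 < f v.1 := v.2.pos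
  simp only [card_univ, Fintype.card_fin]
  omega

example : True := trivial

lemma twice_card_edges (s t : ℕ) (f : Fin t → ℕ) :
    2 * (joinCliques s t f).edgeFinset.card
      = s * (s + (∑ i, f i) - 1) + ∑ i : Fin t, f i * (s + f i - 1) := by
  rw [← sum_degrees_eq_twice_card_edges, Fintype.sum_sum_type]
  congr 1
  · simp [degree_inl, mul_comm]
  · rw [← Finset.univ_sigma_univ, Finset.sum_sigma]
    simp [degree_inr, mul_comm]

lemma ncard_edges (s t : ℕ) (f : Fin t → ℕ) :
    Nat.card (joinCliques s t f).edgeSet = (joinCliques s t f).edgeFinset.card := by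
  rw [Nat.card_eq_fintype_card, ← SimpleGraph.edgeFinset_card]

lemma sum_split (k : ℕ) (h : Fin (k+2) → ℕ) :
    ∑ i, h i = h ⟨0, by omega⟩ + h ⟨1, by omega⟩ + ∑ i : Fin k, h ⟨(i : ℕ) + 2, by omega⟩ := by
  rw [Fin.sum_univ_succ, Fin.sum_univ_succ]
  have e0 : (0 : Fin (k+2)) = ⟨0, by omega⟩ := by ext; simp
  have e1 : ((0 : Fin (k+1))).succ = (⟨1, by omega⟩ : Fin (k+2)) := by ext; simp
  rw [e0, e1, ← add_assoc]
  congr 1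
  all_goals refine Finset.sum_congr rfl fun i _ => ?_
  all_goals (congr 1; ext; simp; try omega)

lemma term_bound (p a x : ℕ) (hp : 1 ≤ p) (hpx : p ≤ x) (hxa : x ≤ a) :
    x * (x - 1) ≤ p * (p - 1) + (x - p) * (2 * a - 1) := by
  obtain ⟨e, rfl⟩ : ∃ e, x = p + e := ⟨x - p, by omega⟩
  obtain ⟨q, rfl⟩ : ∃ q, p = q + 1 := ⟨p - 1, by omega⟩
  obtain ⟨d, rfl⟩ : ∃ d, a = q + 1 + e + d := ⟨a - (q+1+e), by omega⟩
  have h1 : q + 1 + e - 1 = q + e := by omega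
  have h2 : q + 1 - 1 = q := by omega
  have h3 : q + 1 + e - (q+1) = e := by omega
  have h4 : 2*(q+1+e+d) - 1 = 2*q + 2*e + 2*d + 1 := by omega
  rw [h1, h2, h3, h4]
  nlinarith

lemma final_bound (a E : ℕ) (hE : 1 ≤ E) (ha : 1 ≤ a) :
    a * (a - 1) + E * (2 * a - 1) < (a + E) * (a + E - 1) := by
  obtain ⟨b, rfl⟩ : ∃ b, a = b + 1 := ⟨a - 1, by omega⟩
  have h1 : b + 1 - 1 = b := by omega
  have h2 : 2*(b+1) - 1 = 2*b + 1 := by omega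
  have h3 : b + 1 + E - 1 = b + E := by omega
  rw [h1, h2, h3]
  nlinarith [mul_pos (show 0 < E by omega) (show 0 < E by omega)]

lemma sum_mul_split {τ : ℕ} (s : ℕ) (h : Fin τ → ℕ) (hh : ∀ i, 1 ≤ h i) :
    ∑ i, h i * (s + h i - 1) = s * (∑ i, h i) + ∑ i, h i * (h i - 1) := by
  rw [Finset.mul_sum, ← Finset.sum_add_distrib]
  refine Finset.sum_congr rfl fun i _ => ?_
  have h1 : s + h i - 1 = s + (h i - 1) := by have := hh i; omega
  rw [h1, Nat.mul_add, Nat.mul_comm (h i) s]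



lemma key_ineq (p k m f0 f1 : ℕ) (F : Fin k → ℕ) (hp : 1 ≤ p)
    (hf10 : f1 ≤ f0) (hF0 : ∀ i, F i ≤ f0) (hFp : ∀ i, p ≤ F i)
    (hf2 : 3 ≤ f1) (hf1 : f0 < m)
    (hmsum : m + 3 + k * p = f0 + f1 + ∑ i, F i) :
    f0 * (f0 - 1) + f1 * (f1 - 1) + ∑ i, F i * (F i - 1)
      < m * (m - 1) + 3 * 2 + k * (p * (p - 1)) := by
  set EF := ∑ i, (F i - p) with hEFdef
  have hSF : ∑ i, F i = EF + k * p := by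
    have h : ∀ i ∈ univ, F i = (F i - p) + p := fun i _ => by have := hFp i; omega
    rw [Finset.sum_congr rfl h, Finset.sum_add_distrib]
    simp [hEFdef, mul_comm]
  have hmE : m = f0 + ((f1 - 3) + EF) := by omega
  have hE1 : 1 ≤ (f1 - 3) + EF := by omega
  have hf03 : 3 ≤ f0 := le_trans hf2 hf10
  have hTB : ∑ i, F i * (F i - 1) ≤ k * (p * (p - 1)) + EF * (2 * f0 - 1) := by
    calc ∑ i, F i * (F i - 1)
        ≤ ∑ i, (p * (p - 1) + (F i - p) * (2 * f0 - 1)) :=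
          Finset.sum_le_sum fun i _ => term_bound p f0 (F i) hp (hFp i) (hF0 i)
      _ = k * (p * (p - 1)) + EF * (2 * f0 - 1) := by
          rw [Finset.sum_add_distrib, ← Finset.sum_mul, Finset.sum_const, Finset.card_univ,
            Fintype.card_fin, smul_eq_mul, hEFdef, mul_assoc, Finset.sum_mul]
  have hb1 : f1 * (f1 - 1) ≤ 3 * 2 + (f1 - 3) * (2 * f0 - 1) :=
    term_bound 3 f0 f1 (by omega) hf2 hf10
  have hfin : f0 * (f0 - 1) + ((f1 - 3) + EF) * (2 * f0 - 1) < m * (m - 1) := by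
    rw [hmE]
    exact final_bound f0 _ hE1 (by omega)
  have hdist : ((f1 - 3) + EF) * (2 * f0 - 1) = (f1 - 3) * (2 * f0 - 1) + EF * (2 * f0 - 1) :=
    add_mul _ _ _
  omega

lemma key_sum (p k m : ℕ) (f : Fin (k+2) → ℕ) (hp : 1 ≤ p)
    (hmono : ∀ i j : Fin (k+2), i ≤ j → f j ≤ f i) (hfp : ∀ i, p ≤ f i)
    (hf2 : 3 ≤ f ⟨1, by omega⟩) (hf1 : f ⟨0, by omega⟩ < m)
    (hmsum : m + 3 + k * p = ∑ i, f i) :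
    ∑ i, f i * (f i - 1) < m * (m - 1) + 3 * 2 + k * (p * (p - 1)) := by
  rw [sum_split k (fun i => f i * (f i - 1))]
  rw [sum_split k f] at hmsum
  exact key_ineq p k m (f ⟨0, by omega⟩) (f ⟨1, by omega⟩)
    (fun i => f ⟨(i : ℕ) + 2, by omega⟩) hp
    (hmono ⟨0, by omega⟩ ⟨1, by omega⟩ (by simp [Fin.le_def]))
    (fun i => hmono ⟨0, by omega⟩ ⟨(i : ℕ) + 2, by omega⟩ (by simp [Fin.le_def]))
    (fun i => hfp _) hf2 hf1 hmsum

lemma main_reduce (s τ : ℕ) (f g : Fin τ → ℕ) (hf1 : ∀ i, 1 ≤ f i) (hg1 : ∀ i, 1 ≤ g i)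
    (hsum : ∑ i, g i = ∑ i, f i)
    (hlt : ∑ i, f i * (f i - 1) < ∑ i, g i * (g i - 1)) :
    Nat.card (joinCliques s τ f).edgeSet < Nat.card (joinCliques s τ g).edgeSet := by
  rw [ncard_edges, ncard_edges]
  have hL := twice_card_edges s τ f
  have hR := twice_card_edges s τ g
  rw [sum_mul_split s f hf1] at hL
  rw [sum_mul_split s g hg1, hsum] at hR
  omega

theorem stmt3 (s t p n : ℕ) (f : Fin t → ℕ) (hs : 1 ≤ s) (ht : 2 ≤ t) (hp : 1 ≤ p)
    (hsum : n = (∑ i, f i) + s)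
    (hmono : ∀ i j : Fin t, i ≤ j → f j ≤ f i)
    (hfp : ∀ i, p ≤ f i)
    (hf2 : 3 ≤ f ⟨1, by omega⟩)
    (hf1 : f ⟨0, by omega⟩ < n - s - (t - 2) * p - 3) :
    Nat.card (joinCliques s t f).edgeSet <
      Nat.card (joinCliques s t
        (fun i => if (i : ℕ) = 0 then n - s - (t - 2) * p - 3
          else if (i : ℕ) = 1 then 3 else p)).edgeSet := by
  obtain ⟨k, rfl⟩ := Nat.exists_eq_add_of_le' ht
  have hk : k + 2 - 2 = k := by omega
  rw [hk] at hf1 ⊢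
  set m := n - s - k * p - 3 with hmdef
  -- facts about the sum of f
  have htail : k * p ≤ ∑ i : Fin k, f ⟨(i : ℕ) + 2, by omega⟩ := by
    calc k * p = ∑ _i : Fin k, p := by simp [mul_comm]
      _ ≤ _ := Finset.sum_le_sum fun i _ => hfp _
  have hsplitf := sum_split k f
  have hmsum : m + 3 + k * p = ∑ i, f i := by
    have h2 : 3 ≤ f ⟨1, by omega⟩ := hf2
    omega
  -- the comparison graph's size function
  have hg0 : ∀ h : 0 < k + 2,
      (if ((⟨0, h⟩ : Fin (k+2)) : ℕ) = 0 then m else if ((⟨0, h⟩ : Fin (k+2)) : ℕ) = 1 then 3 else p) = m := by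
    intro h; simp
  apply main_reduce
  · exact fun i => le_trans hp (hfp i)
  · intro i
    split_ifs <;> omega
  · rw [sum_split k (fun i : Fin (k+2) => if (i : ℕ) = 0 then m else if (i : ℕ) = 1 then 3 else p)]
    simp
    omega
  · have hgsum : ∑ i : Fin (k+2),
        (fun i : Fin (k+2) => if (i : ℕ) = 0 then m else if (i : ℕ) = 1 then 3 else p) i
          * ((fun i : Fin (k+2) => if (i : ℕ) = 0 then m else if (i : ℕ) = 1 then 3 else p) i - 1)
        = m * (m - 1) + 3 * 2 + k * (p * (p - 1)) := by
      rw [sum_split k]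
      simp [mul_comm, mul_left_comm, mul_assoc]
    rw [hgsum]
    exact key_sum p k m f hp hmono hfp hf2 hf1 hmsum
end

section
/- Let k ≥ 1, δ ≥ s + 1, s ≥ k + 2 and n ≥ 6δ − 5k + 8 be integers with n ≥ s + (s−k)(δ+1−s) + 3. Then |E(K_δ ∨ (K_{n−2δ+k−3} ∪ K_3 ∪ (δ−k)K_1))| > |E(K_s ∨ (K_{n−s−(s−k)(δ+1−s)−3} ∪ K_3 ∪ (s−k)K_{δ+1−s}))|. -/
open SimpleGraph Finset

/-- `K_s ∨ (K_{n-s-(s-k)(d+1-s)-3} ∪ K_3 ∪ (s-k)K_{d+1-s})`. -/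
def Gstar (n k s d : ℕ) :=
  joinCliques s (2 + (s - k))
    (fun i => if (i : ℕ) = 0 then n - s - (s - k) * (d + 1 - s) - 3
      else if (i : ℕ) = 1 then 3 else d + 1 - s)

instance (s t : ℕ) (f : Fin t → ℕ) : DecidableRel (joinCliques s t f).Adj := by
  intro x y
  rcases x with a | ⟨i, b⟩ <;> rcases y with c | ⟨j, d⟩ <;>
    exact instDecidableAnd

lemma key_sum_s16 (p : ℕ) (a : Fin p) :
    (∑ c : Fin p, if a ≠ c then (1:ℕ) else 0) = p - 1 := by
  have h1 : (∑ c : Fin p, if a ≠ c then (1:ℕ) else 0)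
      + (∑ c : Fin p, if a = c then (1:ℕ) else 0) = p := by
    rw [← Finset.sum_add_distrib]
    have h : ∀ c : Fin p, ((if a ≠ c then (1:ℕ) else 0) + if a = c then 1 else 0) = 1 := by
      intro c; by_cases h : a = c <;> simp [h]
    rw [Finset.sum_congr rfl (fun c _ => h c), Finset.sum_const, card_univ, Fintype.card_fin,
      smul_eq_mul, mul_one]
  have h2 : (∑ c : Fin p, if a = c then (1:ℕ) else 0) = 1 := by
    simp [Finset.sum_ite_eq]
  omega

lemma twice_card (s t : ℕ) (f : Fin t → ℕ) :
    2 * Nat.card (joinCliques s t f).edgeSet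
      = s * (s - 1) + 2 * (s * ∑ i, f i) + ∑ i, f i * (f i - 1) := by
  have hT : Fintype.card (Σ i : Fin t, Fin (f i)) = ∑ i, f i := by simp
  have adj_ll : ∀ a c : Fin s, (joinCliques s t f).Adj (Sum.inl a) (Sum.inl c) ↔ a ≠ c := by
    intro a c; simp [joinCliques]
  have adj_lr : ∀ (a : Fin s) (x : Σ i, Fin (f i)),
      (joinCliques s t f).Adj (Sum.inl a) (Sum.inr x) := by
    intro a x; exact ⟨by simp, trivial⟩
  have adj_rl : ∀ (x : Σ i, Fin (f i)) (a : Fin s),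
      (joinCliques s t f).Adj (Sum.inr x) (Sum.inl a) := by
    intro x a; exact ⟨by simp, trivial⟩
  have adj_rr : ∀ (x y : Σ i, Fin (f i)),
      (joinCliques s t f).Adj (Sum.inr x) (Sum.inr y) ↔ x ≠ y ∧ x.1 = y.1 := by
    intro x y
    constructor
    · rintro ⟨hne, h⟩; exact ⟨fun hh => hne (by rw [hh]), h⟩
    · rintro ⟨hne, h⟩; exact ⟨fun hh => hne (by injection hh), h⟩
  rw [Nat.card_eq_fintype_card, ← SimpleGraph.edgeFinset_card,
    ← SimpleGraph.sum_degrees_eq_twice_card_edges]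
  have hdeg : ∀ v, (joinCliques s t f).degree v =
      ∑ y, if (joinCliques s t f).Adj v y then 1 else 0 := by
    intro v
    rw [SimpleGraph.degree, SimpleGraph.neighborFinset_eq_filter, Finset.card_filter]
  simp only [hdeg]
  rw [Fintype.sum_sum_type]
  have e1 : (∑ a : Fin s, ∑ y, if (joinCliques s t f).Adj (Sum.inl a) y then 1 else 0)
      = s * (s - 1) + s * ∑ i, f i := by
    have h : ∀ a : Fin s, (∑ y, if (joinCliques s t f).Adj (Sum.inl a) y then 1 else 0)
        = (s - 1) + ∑ i, f i := by
      intro a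
      rw [Fintype.sum_sum_type]
      have p1 : (∑ c : Fin s, if (joinCliques s t f).Adj (Sum.inl a) (Sum.inl c) then (1:ℕ) else 0)
          = s - 1 := by
        simp only [adj_ll]; exact key_sum_s16 s a
      have p2 : (∑ x : Σ i, Fin (f i),
          if (joinCliques s t f).Adj (Sum.inl a) (Sum.inr x) then (1:ℕ) else 0) = ∑ i, f i := by
        simp only [adj_lr, if_true]
        rw [Finset.sum_const, card_univ, hT, smul_eq_mul, mul_one]
      rw [p1, p2]
    rw [Finset.sum_congr rfl (fun a _ => h a), Finset.sum_const, card_univ, Fintype.card_fin,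
      smul_eq_mul, mul_add]
  have e2 : (∑ x : Σ i, Fin (f i), ∑ y, if (joinCliques s t f).Adj (Sum.inr x) y then 1 else 0)
      = s * (∑ i, f i) + ∑ i, f i * (f i - 1) := by
    have h : ∀ x : Σ i, Fin (f i),
        (∑ y, if (joinCliques s t f).Adj (Sum.inr x) y then 1 else 0)
        = s + (f x.1 - 1) := by
      rintro ⟨i, b⟩
      rw [Fintype.sum_sum_type]
      have p1 : (∑ c : Fin s,
          if (joinCliques s t f).Adj (Sum.inr ⟨i, b⟩) (Sum.inl c) then (1:ℕ) else 0) = s := by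
        simp only [adj_rl, if_true]
        rw [Finset.sum_const, card_univ, Fintype.card_fin, smul_eq_mul, mul_one]
      have p2 : (∑ y : Σ j, Fin (f j),
          if (joinCliques s t f).Adj (Sum.inr ⟨i, b⟩) (Sum.inr y) then (1:ℕ) else 0)
          = f i - 1 := by
        simp only [adj_rr]
        rw [← Finset.univ_sigma_univ, Finset.sum_sigma]
        have q : ∀ j : Fin t, (∑ c : Fin (f j),
            if (⟨i, b⟩ : Σ i, Fin (f i)) ≠ ⟨j, c⟩ ∧ i = j then (1:ℕ) else 0)
            = if i = j then f i - 1 else 0 := by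
          intro j
          by_cases hij : i = j
          · subst hij
            simp only [if_pos rfl, and_true]
            have : ∀ c : Fin (f i),
                ((⟨i, b⟩ : Σ i, Fin (f i)) ≠ ⟨i, c⟩) ↔ b ≠ c := by
              intro c; simp
            simp only [this, eq_self_iff_true, if_true]
            exact key_sum_s16 (f i) b
          · simp [hij]
        rw [Finset.sum_congr rfl (fun j _ => q j), Finset.sum_ite_eq]
        simp
      rw [p1, p2]
    rw [Finset.sum_congr rfl (fun x _ => h x)]
    have h3 : (∑ x : Σ i, Fin (f i), (f x.1 - 1)) = ∑ i, f i * (f i - 1) := by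
      rw [← Finset.univ_sigma_univ, Finset.sum_sigma]
      refine Finset.sum_congr rfl fun i _ => ?_
      dsimp only
      rw [Finset.sum_const, card_univ, Fintype.card_fin, smul_eq_mul]
    rw [Finset.sum_add_distrib, h3, Finset.sum_const, card_univ, hT, smul_eq_mul]
    ring
  rw [e1, e2]; ring

lemma sum_ite_fin (m A B C : ℕ) (g : ℕ → ℕ) :
    (∑ i : Fin (2 + m), g (if (i : ℕ) = 0 then A else if (i : ℕ) = 1 then B else C))
      = g A + g B + m * g C := by
  rw [Fin.sum_univ_eq_sum_range (fun j => g (if j = 0 then A else if j = 1 then B else C)),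
    Nat.add_comm 2 m, Finset.sum_range_succ', Finset.sum_range_succ']
  simp [Finset.sum_const, Nat.add_comm, Nat.add_assoc, Nat.add_left_comm]

lemma nat_mul_pred (x : ℕ) : x * (x - 1) = x * x - x := by
  cases x with
  | zero => rfl
  | succ m =>
      have h : (m+1) * (m+1) = (m+1) * m + (m+1) := by ring
      simp [Nat.succ_sub_one, h]

lemma nat_le_sq (x : ℕ) : x ≤ x * x := by
  cases x with
  | zero => simp
  | succ m =>
      have h : (m+1) * (m+1) = (m+1) * m + (m+1) := by ring
      rw [h]; exact Nat.le_add_left _ _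

lemma aux_ineq (k s d n : ℤ) (hk : 1 ≤ k) (hs : k + 2 ≤ s) (hd : s + 1 ≤ d)
    (hn : 6*d - 5*k + 8 ≤ n) (hn2 : s + (s-k)*(d+1-s) + 3 ≤ n) :
    s*s - s + 2*s*(n-s) + (n-s-(s-k)*(d+1-s)-3)*(n-s-(s-k)*(d+1-s)-3) - (n-s-(s-k)*(d+1-s)-3) + 6
      + (s-k)*((d+1-s)*(d+1-s) - (d+1-s))
    < d*d - d + 2*d*(n-d) + (n+k-2*d-3)*(n+k-2*d-3) - (n+k-2*d-3) + 6 := by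
  nlinarith [mul_nonneg (mul_nonneg (by linarith : (0:ℤ) ≤ s-k-2) (by linarith : (0:ℤ) ≤ d-s-1))
      (by linarith : (0:ℤ) ≤ n-s-(s-k)*(d+1-s)-3),
    mul_nonneg (by linarith : (0:ℤ) ≤ s-k-2) (by linarith : (0:ℤ) ≤ d-s-1),
    mul_nonneg (by linarith : (0:ℤ) ≤ s-k-2) (by linarith : (0:ℤ) ≤ n - 6*d+5*k-8),
    mul_nonneg (by linarith : (0:ℤ) ≤ d-s-1) (by linarith : (0:ℤ) ≤ n - 6*d+5*k-8)]

set_option maxHeartbeats 1000000 in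
theorem stmt16 (n k s d : ℕ) (hk : 1 ≤ k) (hs : k + 2 ≤ s) (hd : s + 1 ≤ d)
    (hn : 6 * d + 8 ≤ n + 5 * k) (hn2 : s + (s - k) * (d + 1 - s) + 3 ≤ n) :
    Nat.card (Gstar n k s d).edgeSet < Nat.card (Gdelta n k d).edgeSet := by
  have hD : 2 * Nat.card (Gdelta n k d).edgeSet
      = d * (d - 1) + 2 * (d * ((n + k - 2 * d - 3) + 3 + (d - k) * 1))
        + ((n + k - 2 * d - 3) * ((n + k - 2 * d - 3) - 1) + 3 * (3 - 1)
          + (d - k) * (1 * (1 - 1))) := by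
    have h := twice_card d (2 + (d - k))
      (fun i => if (i : ℕ) = 0 then n + k - 2 * d - 3 else if (i : ℕ) = 1 then 3 else 1)
    rw [sum_ite_fin (d - k) _ _ _ (fun x => x),
      sum_ite_fin (d - k) _ _ _ (fun x => x * (x - 1))] at h
    exact h
  have hS : 2 * Nat.card (Gstar n k s d).edgeSet
      = s * (s - 1)
        + 2 * (s * ((n - s - (s - k) * (d + 1 - s) - 3) + 3 + (s - k) * (d + 1 - s)))
        + ((n - s - (s - k) * (d + 1 - s) - 3) * ((n - s - (s - k) * (d + 1 - s) - 3) - 1)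
          + 3 * (3 - 1) + (s - k) * ((d + 1 - s) * ((d + 1 - s) - 1))) := by
    have h := twice_card s (2 + (s - k))
      (fun i => if (i : ℕ) = 0 then n - s - (s - k) * (d + 1 - s) - 3
        else if (i : ℕ) = 1 then 3 else d + 1 - s)
    rw [sum_ite_fin (s - k) _ _ _ (fun x => x),
      sum_ite_fin (s - k) _ _ _ (fun x => x * (x - 1))] at h
    exact h
  suffices h : 2 * Nat.card (Gstar n k s d).edgeSet < 2 * Nat.card (Gdelta n k d).edgeSet by
    omega
  rw [hD, hS]
  obtain ⟨P, hP⟩ : ∃ P, P = (s - k) * (d + 1 - s) := ⟨_, rfl⟩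
  rw [← hP] at hn2 ⊢
  simp only [nat_mul_pred]
  norm_num
  have hks : k ≤ s := by omega
  have hsd : s ≤ d + 1 := by omega
  have hkd : k ≤ d := by omega
  have h1s : 1 ≤ s := by omega
  have h1d : 1 ≤ d := by omega
  have hA1 : 2 * d ≤ n + k := by omega
  have hA2 : 3 ≤ n + k - 2 * d := by omega
  have hB1 : s ≤ n := by omega
  have hB2 : P ≤ n - s := by omega
  have hB3 : 3 ≤ n - s - P := by omega
  zify [hks, hsd, hkd, h1s, h1d, hA1, hA2, hB1, hB2, hB3,
    nat_le_sq (n + k - 2 * d - 3), nat_le_sq (n - s - P - 3), nat_le_sq (d + 1 - s),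
    nat_le_sq s, nat_le_sq d]
  have hPZ : (P : ℤ) = ((s : ℤ) - k) * ((d : ℤ) + 1 - s) := by
    zify [hks, hsd] at hP; exact hP
  rw [hPZ]
  have main := aux_ineq (k : ℤ) s d n (by exact_mod_cast hk) (by push_cast; omega)
    (by push_cast; omega) (by push_cast; omega)
    (by rw [← hPZ]; push_cast; omega)
  linarith [main]
end

section
/- Let x ↦ f(x) = x³ + (−2k−δ−3)x² + (2n + k² + 2kδ + 5k − δ − 5)x − 2(k+1)n + δ(−k²+k+3) − 2k² + 4k + 13 be a real cubic, where k ≥ 1, δ ≥ k+3 and n ≥ max{6δ−5k+8, δ²/6 − (k/3 − 3/2)δ + k²/6 − k/2 + 4} are real parameters. Then f is increasing on the interval [k+2, δ−1] and f(x) ≥ f(k+2) = 2n + k − 3δ − 1 > 0 for all x in [k+2, δ−1]. -/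
open Set

theorem stmt17 (k d n : ℝ) (hk : 1 ≤ k) (hd : k + 3 ≤ d)
    (hn1 : 6 * d - 5 * k + 8 ≤ n)
    (hn2 : d ^ 2 / 6 - (k / 3 - 3 / 2) * d + k ^ 2 / 6 - k / 2 + 4 ≤ n) :
    MonotoneOn (fun x : ℝ => x ^ 3 + (-2 * k - d - 3) * x ^ 2
        + (2 * n + k ^ 2 + 2 * k * d + 5 * k - d - 5) * x
        - 2 * (k + 1) * n + d * (-k ^ 2 + k + 3) - 2 * k ^ 2 + 4 * k + 13)
      (Set.Icc (k + 2) (d - 1)) ∧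
    (∀ x ∈ Set.Icc (k + 2) (d - 1),
      ((k + 2) ^ 3 + (-2 * k - d - 3) * (k + 2) ^ 2
        + (2 * n + k ^ 2 + 2 * k * d + 5 * k - d - 5) * (k + 2)
        - 2 * (k + 1) * n + d * (-k ^ 2 + k + 3) - 2 * k ^ 2 + 4 * k + 13) ≤
      (x ^ 3 + (-2 * k - d - 3) * x ^ 2
        + (2 * n + k ^ 2 + 2 * k * d + 5 * k - d - 5) * x
        - 2 * (k + 1) * n + d * (-k ^ 2 + k + 3) - 2 * k ^ 2 + 4 * k + 13)) ∧
    ((k + 2) ^ 3 + (-2 * k - d - 3) * (k + 2) ^ 2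
        + (2 * n + k ^ 2 + 2 * k * d + 5 * k - d - 5) * (k + 2)
        - 2 * (k + 1) * n + d * (-k ^ 2 + k + 3) - 2 * k ^ 2 + 4 * k + 13)
      = 2 * n + k - 3 * d - 1 ∧
    0 < 2 * n + k - 3 * d - 1 := by
  have hmono : MonotoneOn (fun x : ℝ => x ^ 3 + (-2 * k - d - 3) * x ^ 2
        + (2 * n + k ^ 2 + 2 * k * d + 5 * k - d - 5) * x
        - 2 * (k + 1) * n + d * (-k ^ 2 + k + 3) - 2 * k ^ 2 + 4 * k + 13)
      (Set.Icc (k + 2) (d - 1)) := by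
    intro a _ b _ hab
    simp only
    have h1 : 0 ≤ b - a := sub_nonneg.2 hab
    have hQ : 0 ≤ (b ^ 2 + a * b + a ^ 2) + (-2 * k - d - 3) * (a + b)
        + (2 * n + k ^ 2 + 2 * k * d + 5 * k - d - 5) := by
      nlinarith [sq_nonneg (3 * (a + b) - 2 * (2 * k + d + 3)), sq_nonneg (a - b)]
    nlinarith [mul_nonneg h1 hQ]
  refine ⟨hmono, ?_, by ring, by linarith⟩
  intro x hx
  have hmem : k + 2 ∈ Set.Icc (k + 2) (d - 1) := ⟨le_refl _, by linarith [hx.1, hx.2]⟩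
  exact hmono hmem hx hx.1
end
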